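/- arXiv:0712.2923 — 2 statements merged into one kernel-verified Lean document; each statement's English description precedes it below -/
import Mathlib

section
/- For every f : ℤ^d → ℝ, every local maximum set of the function L_n f has cardinality strictly larger than n, and every local minimum set of the function U_n f has cardinality strictly larger than n. -/
open Set

/-- A connection (connected class) on `ℤ^d`. -/
def IsConnection {d : ℕ} (C : Set (Set (Fin d → ℤ))) : Prop :=
  ∅ ∈ C ∧ (∀ x : Fin d → ℤ, {x} ∈ C) ∧
    ∀ S : Set (Set (Fin d → ℤ)), (∀ A ∈ S, A ∈ C) → (⋂₀ S).Nonempty → ⋃₀ S ∈ C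

/-- A connection on `ℤ^d` satisfying the additional axioms (α), (β), (γ). -/
def GoodConnection {d : ℕ} (C : Set (Set (Fin d → ℤ))) : Prop :=
  IsConnection C ∧
  Set.univ ∈ C ∧
  (∀ (a : Fin d → ℤ), ∀ V ∈ C, (fun x => a + x) '' V ∈ C) ∧
  (∀ V ∈ C, ∀ W ∈ C, V ⊂ W → ∃ x ∈ W \ V, insert x V ∈ C)

/-- `𝒩_n(x)`: the connected sets of cardinality `n+1` containing `x`. -/
def Nn {d : ℕ} (C : Set (Set (Fin d → ℤ))) (n : ℕ) (x : Fin d → ℤ) :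
    Set (Set (Fin d → ℤ)) :=
  {V | V ∈ C ∧ x ∈ V ∧ V.encard = (n : ℕ∞) + 1}

/-- The operator `L_n`. -/
noncomputable def Ln {d : ℕ} (C : Set (Set (Fin d → ℤ))) (n : ℕ)
    (f : (Fin d → ℤ) → ℝ) (x : Fin d → ℤ) : ℝ :=
  sSup ((fun V => sInf (f '' V)) '' Nn C n x)

/-- The operator `U_n`. -/
noncomputable def Un {d : ℕ} (C : Set (Set (Fin d → ℤ))) (n : ℕ)
    (f : (Fin d → ℤ) → ℝ) (x : Fin d → ℤ) : ℝ :=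
  sInf ((fun V => sSup (f '' V)) '' Nn C n x)

/-- The set of points adjacent to `V`. -/
def adjSet {d : ℕ} (C : Set (Set (Fin d → ℤ))) (V : Set (Fin d → ℤ)) :
    Set (Fin d → ℤ) :=
  {x | x ∉ V ∧ insert x V ∈ C}

/-- `V` is a local maximum set of `f`. -/
def IsLocalMaxSet {d : ℕ} (C : Set (Set (Fin d → ℤ))) (f : (Fin d → ℤ) → ℝ)
    (V : Set (Fin d → ℤ)) : Prop :=
  V ∈ C ∧ V.Finite ∧ V.Nonempty ∧ ∀ y ∈ adjSet C V, ∀ z ∈ V, f y < f z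

/-- `V` is a local minimum set of `f`. -/
def IsLocalMinSet {d : ℕ} (C : Set (Set (Fin d → ℤ))) (f : (Fin d → ℤ) → ℝ)
    (V : Set (Fin d → ℤ)) : Prop :=
  V ∈ C ∧ V.Finite ∧ V.Nonempty ∧ ∀ y ∈ adjSet C V, ∀ z ∈ V, f z < f y



section Aux

variable {d : ℕ} {C : Set (Set (Fin d → ℤ))}

lemma union_mem_of_conn (hC : GoodConnection C) {V W : Set (Fin d → ℤ)}
    (hV : V ∈ C) (hW : W ∈ C) (h : (V ∩ W).Nonempty) : V ∪ W ∈ C := by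
  have := hC.1.2.2 {V, W} (by rintro A (rfl | rfl) <;> assumption)
    (by rwa [sInter_pair])
  rwa [sUnion_pair] at this

lemma grow (hd : 1 ≤ d) (hC : GoodConnection C) :
    ∀ (k : ℕ) (A : Set (Fin d → ℤ)), A ∈ C → A.Finite →
      ∃ B ∈ C, A ⊆ B ∧ B.Finite ∧ B.encard = A.encard + k := by
  haveI : Nonempty (Fin d) := ⟨⟨0, hd⟩⟩
  haveI : Infinite (Fin d → ℤ) := Pi.infinite_of_right
  intro k
  induction k with
  | zero => exact fun A hA hAf => ⟨A, hA, subset_rfl, hAf, by simp⟩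
  | succ k ih =>
    intro A hA hAf
    obtain ⟨B, hB, hAB, hBf, hBe⟩ := ih A hA hAf
    have hss : B ⊂ univ := (ssubset_univ_iff).mpr (fun h => Set.infinite_univ (h ▸ hBf))
    obtain ⟨x, hx, hins⟩ := hC.2.2.2 B hB univ hC.2.1 hss
    refine ⟨insert x B, hins, hAB.trans (subset_insert _ _), hBf.insert x, ?_⟩
    rw [encard_insert_of_notMem hx.2, hBe]
    push_cast
    ring

lemma Nn_props {n : ℕ} {x : Fin d → ℤ} {W : Set (Fin d → ℤ)} (hW : W ∈ Nn C n x) :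
    W.Finite ∧ W.Nonempty := by
  have he : W.encard = ((n + 1 : ℕ) : ℕ∞) := by rw [hW.2.2]; push_cast; ring
  exact ⟨finite_of_encard_eq_coe he, ⟨x, hW.2.1⟩⟩

lemma Nn_nonempty (hd : 1 ≤ d) (hC : GoodConnection C) (n : ℕ) (x : Fin d → ℤ) :
    (Nn C n x).Nonempty := by
  obtain ⟨B, hB, hxB, hBf, hBe⟩ := grow hd hC n {x} (hC.1.2.1 x) (finite_singleton x)
  exact ⟨B, hB, hxB rfl, by rw [hBe, encard_singleton]; ring⟩

lemma sInf_le_Ln {n : ℕ} {f : (Fin d → ℤ) → ℝ} {x : Fin d → ℤ}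
    {W : Set (Fin d → ℤ)} (hW : W ∈ Nn C n x) : sInf (f '' W) ≤ Ln C n f x := by
  apply le_csSup _ (mem_image_of_mem _ hW)
  refine ⟨f x, ?_⟩
  rintro r ⟨W', hW', rfl⟩
  exact csInf_le ((Nn_props hW').1.image f).bddBelow (mem_image_of_mem f hW'.2.1)

lemma Un_le_sSup {n : ℕ} {f : (Fin d → ℤ) → ℝ} {x : Fin d → ℤ}
    {W : Set (Fin d → ℤ)} (hW : W ∈ Nn C n x) : Un C n f x ≤ sSup (f '' W) := by
  apply csInf_le _ (mem_image_of_mem _ hW)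
  refine ⟨f x, ?_⟩
  rintro r ⟨W', hW', rfl⟩
  exact le_csSup ((Nn_props hW').1.image f).bddAbove (mem_image_of_mem f hW'.2.1)

end Aux

/-- every local maximum set of `L_n f` and every local minimum set
of `U_n f` has cardinality strictly larger than `n`. -/
theorem localExtrSets_of_Ln_Un_large {d : ℕ} (hd : 1 ≤ d)
    (C : Set (Set (Fin d → ℤ))) (hC : GoodConnection C)
    (hadj : ∀ V ∈ C, V.Finite → (adjSet C V).Finite)
    (n : ℕ) (hn : 1 ≤ n) (f : (Fin d → ℤ) → ℝ) (V : Set (Fin d → ℤ)) :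
    (IsLocalMaxSet C (Ln C n f) V → (n : ℕ∞) < V.encard) ∧
    (IsLocalMinSet C (Un C n f) V → (n : ℕ∞) < V.encard) := by
  constructor
  · intro hV
    by_contra hle
    push_cast at hle
    rw [not_lt] at hle
    obtain ⟨hVC, hVf, hVne, hloc⟩ := hV
    set g := Ln C n f with hg
    -- adjSet is nonempty
    haveI : Nonempty (Fin d) := ⟨⟨0, hd⟩⟩
    haveI : Infinite (Fin d → ℤ) := Pi.infinite_of_right
    have hVuniv : V ⊂ univ := (ssubset_univ_iff).mpr (fun h => Set.infinite_univ (h ▸ hVf))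
    obtain ⟨x₀, hx₀, hins₀⟩ := hC.2.2.2 V hVC univ hC.2.1 hVuniv
    have hadjne : (adjSet C V).Nonempty := ⟨x₀, hx₀.2, hins₀⟩
    -- z : minimizer of g on V
    obtain ⟨z, hzV, hzmin⟩ := Set.exists_min_image V g hVf hVne
    -- y₀ : maximizer of g on adjSet
    obtain ⟨y₀, hy₀, hy₀max⟩ := Set.exists_max_image (adjSet C V) g (hadj V hVC hVf) hadjne
    have hMlt : g y₀ < g z := hloc y₀ hy₀ z hzV
    -- choose W ∈ Nn C n z with g y₀ < sInf (f '' W)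
    have hlt : g y₀ < sSup ((fun W => sInf (f '' W)) '' Nn C n z) := hMlt
    obtain ⟨r, hr, hrlt⟩ := exists_lt_of_lt_csSup
      ((Nn_nonempty hd hC n z).image _) hlt
    obtain ⟨W, hWNn, rfl⟩ := hr
    obtain ⟨hWf, hWne⟩ := Nn_props hWNn
    -- V ∪ W ∈ C
    have hUC : V ∪ W ∈ C := union_mem_of_conn hC hVC hWNn.1 ⟨z, hzV, hWNn.2.1⟩
    -- V ⊂ V ∪ W
    have hWnotsub : ¬ W ⊆ V := by
      intro hsub
      have := (encard_mono hsub).trans hle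
      rw [hWNn.2.2] at this
      have h2 : (n : ℕ∞) < (n : ℕ∞) + 1 := by
        exact_mod_cast Nat.lt_succ_self n
      exact absurd this (not_le.mpr h2)
    obtain ⟨w, hwW, hwV⟩ := not_subset.mp hWnotsub
    have hss : V ⊂ V ∪ W := ⟨subset_union_left, fun h => hwV (h (Or.inr hwW))⟩
    obtain ⟨x, hx, hinsx⟩ := hC.2.2.2 V hVC (V ∪ W) hUC hss
    have hxadj : x ∈ adjSet C V := ⟨hx.2, hinsx⟩
    have hxW : x ∈ W := hx.1.resolve_left hx.2
    have h1 : sInf (f '' W) ≤ g x := sInf_le_Ln ⟨hWNn.1, hxW, hWNn.2.2⟩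
    have h2 : g x ≤ g y₀ := hy₀max x hxadj
    linarith
  · intro hV
    by_contra hle
    push_cast at hle
    rw [not_lt] at hle
    obtain ⟨hVC, hVf, hVne, hloc⟩ := hV
    set g := Un C n f with hg
    haveI : Nonempty (Fin d) := ⟨⟨0, hd⟩⟩
    haveI : Infinite (Fin d → ℤ) := Pi.infinite_of_right
    have hVuniv : V ⊂ univ := (ssubset_univ_iff).mpr (fun h => Set.infinite_univ (h ▸ hVf))
    obtain ⟨x₀, hx₀, hins₀⟩ := hC.2.2.2 V hVC univ hC.2.1 hVuniv
    have hadjne : (adjSet C V).Nonempty := ⟨x₀, hx₀.2, hins₀⟩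
    obtain ⟨z, hzV, hzmax⟩ := Set.exists_max_image V g hVf hVne
    obtain ⟨y₀, hy₀, hy₀min⟩ := Set.exists_min_image (adjSet C V) g (hadj V hVC hVf) hadjne
    have hMlt : g z < g y₀ := hloc y₀ hy₀ z hzV
    have hlt : sInf ((fun W => sSup (f '' W)) '' Nn C n z) < g y₀ := hMlt
    obtain ⟨r, hr, hrlt⟩ := exists_lt_of_csInf_lt
      ((Nn_nonempty hd hC n z).image _) hlt
    obtain ⟨W, hWNn, rfl⟩ := hr
    obtain ⟨hWf, hWne⟩ := Nn_props hWNn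
    have hUC : V ∪ W ∈ C := union_mem_of_conn hC hVC hWNn.1 ⟨z, hzV, hWNn.2.1⟩
    have hWnotsub : ¬ W ⊆ V := by
      intro hsub
      have := (encard_mono hsub).trans hle
      rw [hWNn.2.2] at this
      have h2 : (n : ℕ∞) < (n : ℕ∞) + 1 := by
        exact_mod_cast Nat.lt_succ_self n
      exact absurd this (not_le.mpr h2)
    obtain ⟨w, hwW, hwV⟩ := not_subset.mp hWnotsub
    have hss : V ⊂ V ∪ W := ⟨subset_union_left, fun h => hwV (h (Or.inr hwW))⟩
    obtain ⟨x, hx, hinsx⟩ := hC.2.2.2 V hVC (V ∪ W) hUC hss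
    have hxadj : x ∈ adjSet C V := ⟨hx.2, hinsx⟩
    have hxW : x ∈ W := hx.1.resolve_left hx.2
    have h1 : g x ≤ sSup (f '' W) := Un_le_sSup ⟨hWNn.1, hxW, hWNn.2.2⟩
    have h2 : g y₀ ≤ g x := hy₀min x hxadj
    linarith
end

section
/- The operators L_n and U_n on functions on ℤ² are total variation preserving: for every f : ℤ² → ℝ with finite support, TV(f) = TV(L_n f) + TV(f − L_n f) and TV(f) = TV(U_n f) + TV(f − U_n f). -/
open Set

/-- `C` is connected w.r.t. the neighbor relation `r`: any two pixels of `C`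
are joined by a chain of successively `r`-neighboring pixels inside `C`. -/
def ConnectedIn (r : ℤ × ℤ → ℤ × ℤ → Prop) (C : Set (ℤ × ℤ)) : Prop :=
  ∀ p ∈ C, ∀ q ∈ C, Relation.ReflTransGen (fun a b => r a b ∧ a ∈ C ∧ b ∈ C) p q

/-- `𝒩_n(x)`: connected sets of cardinality `n+1` containing `x`. -/
def Nn2 (r : ℤ × ℤ → ℤ × ℤ → Prop) (n : ℕ) (x : ℤ × ℤ) : Set (Set (ℤ × ℤ)) :=
  {V | ConnectedIn r V ∧ x ∈ V ∧ V.encard = (n : ℕ∞) + 1}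

/-- The operator `L_n` on functions on `ℤ²`. -/
noncomputable def Ln2 (r : ℤ × ℤ → ℤ × ℤ → Prop) (n : ℕ)
    (f : ℤ × ℤ → ℝ) (x : ℤ × ℤ) : ℝ :=
  sSup ((fun V => sInf (f '' V)) '' Nn2 r n x)

/-- The operator `U_n` on functions on `ℤ²`. -/
noncomputable def Un2 (r : ℤ × ℤ → ℤ × ℤ → Prop) (n : ℕ)
    (f : ℤ × ℤ → ℝ) (x : ℤ × ℤ) : ℝ :=
  sInf ((fun V => sSup (f '' V)) '' Nn2 r n x)

/-- Total variation of a function on `ℤ²`, a sum with values in `[0, ∞]`. -/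
noncomputable def TV (g : ℤ × ℤ → ℝ) : ENNReal :=
  ∑' p : ℤ × ℤ,
    (ENNReal.ofReal |g (p.1 + 1, p.2) - g p| + ENNReal.ofReal |g (p.1, p.2 + 1) - g p|)

abbrev PP := ℤ × ℤ

namespace TVAux

variable {α : Type*}

/-- Paths of a given length for a relation. -/
inductive ChainLen (s : α → α → Prop) : ℕ → α → α → Prop
  | refl (a : α) : ChainLen s 0 a a
  | tail {k : ℕ} {a b c : α} : ChainLen s k a b → s b c → ChainLen s (k + 1) a c

theorem chainLen_of_rtg {s : α → α → Prop} {a b : α}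
    (h : Relation.ReflTransGen s a b) : ∃ k, ChainLen s k a b := by
  induction h with
  | refl => exact ⟨0, .refl a⟩
  | tail _ hbc ih => obtain ⟨k, hk⟩ := ih; exact ⟨k + 1, hk.tail hbc⟩

theorem chainLen_zero {s : α → α → Prop} {a b : α} (h : ChainLen s 0 a b) : a = b := by
  cases h; rfl

theorem rtg_symm {s : α → α → Prop} (hs : ∀ a b, s a b → s b a) {a b : α}
    (h : Relation.ReflTransGen s a b) : Relation.ReflTransGen s b a := by
  induction h with
  | refl => exact .refl
  | tail _ hbc ih => exact Relation.ReflTransGen.head (hs _ _ hbc) ih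

end TVAux

open TVAux

theorem exists_noncut {r : PP → PP → Prop} (hsymm : ∀ p q, r p q → r q p)
    {C : Set PP} (hC : C.Finite) (hconn : ConnectedIn r C)
    {x : PP} (hx : x ∈ C) (h2 : ∃ z ∈ C, z ≠ x) :
    ∃ y ∈ C, y ≠ x ∧ ConnectedIn r (C \ {y}) := by
  classical
  set s := fun a b => r a b ∧ a ∈ C ∧ b ∈ C with hs
  have hne : ∀ z ∈ C, {k | ChainLen s k x z}.Nonempty := fun z hz =>
    chainLen_of_rtg (hconn x hx z hz)
  set D := fun z => sInf {k | ChainLen s k x z} with hD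
  obtain ⟨y, hyC, hymax⟩ := Set.exists_max_image C D hC ⟨x, hx⟩
  obtain ⟨z0, hz0C, hz0x⟩ := h2
  have hDz0 : 1 ≤ D z0 := by
    by_contra h
    have h0 : D z0 = 0 := by omega
    have := Nat.sInf_mem (hne z0 hz0C)
    rw [show sInf {k | ChainLen s k x z0} = D z0 from rfl, h0] at this
    exact hz0x (chainLen_zero this).symm
  have hyx : y ≠ x := by
    intro h
    have hx0 : D x = 0 := Nat.sInf_eq_zero.2 (Or.inl (ChainLen.refl x))
    have := hymax z0 hz0C
    rw [h, hx0] at this; omega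
  refine ⟨y, hyC, hyx, ?_⟩
  have key : ∀ k, ∀ z ∈ C, z ≠ y → D z ≤ k →
      Relation.ReflTransGen (fun a b => r a b ∧ a ∈ C \ {y} ∧ b ∈ C \ {y}) x z := by
    intro k
    induction k with
    | zero =>
      intro z hz hzy hk
      have hmem := Nat.sInf_mem (hne z hz)
      rw [show sInf {k | ChainLen s k x z} = D z from rfl, Nat.le_zero.mp hk] at hmem
      rw [← chainLen_zero hmem]
    | succ k ih =>
      intro z hz hzy hk
      have hmem : ChainLen s (D z) x z := Nat.sInf_mem (hne z hz)
      rcases Nat.eq_zero_or_pos (D z) with h0 | hpos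
      · rw [h0] at hmem
        rw [← chainLen_zero hmem]
      · obtain ⟨d, hd⟩ : ∃ d, D z = d + 1 := ⟨D z - 1, by omega⟩
        rw [hd] at hmem
        cases hmem with
        | tail hcw hwz =>
          rename_i w
          have hDw : D w ≤ d := Nat.sInf_le hcw
          have hwy : w ≠ y := by
            intro h
            have h1 := hymax z hz
            rw [← h] at h1
            omega
          have hwC : w ∈ C := hwz.2.1
          have hxw := ih w hwC hwy (by omega)
          exact hxw.tail ⟨hwz.1, ⟨hwC, hwy⟩, ⟨hz, hzy⟩⟩
  intro p hp q hq
  have hsym' : ∀ a b, (fun a b => r a b ∧ a ∈ C \ {y} ∧ b ∈ C \ {y}) a b →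
      (fun a b => r a b ∧ a ∈ C \ {y} ∧ b ∈ C \ {y}) b a :=
    fun a b ⟨h1, h2, h3⟩ => ⟨hsymm _ _ h1, h3, h2⟩
  exact (rtg_symm hsym' (key (D p) p hp.1 hp.2 le_rfl)).trans (key (D q) q hq.1 hq.2 le_rfl)

theorem trim_lemma {r : PP → PP → Prop} (hsymm : ∀ p q, r p q → r q p)
    {C : Set PP} (hconn : ConnectedIn r C)
    {q : PP} (hq : q ∈ C) {n : ℕ} (hcard : C.encard = (n : ℕ∞) + 1 + 1) :
    ∃ W ⊆ C, W ∈ Nn2 r n q := by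
  have hc2 : C.encard = ((n + 2 : ℕ) : ℕ∞) := by rw [hcard]; push_cast; ring
  have hCfin : C.Finite := by
    rw [← Set.encard_ne_top_iff, hc2]; exact ENat.coe_ne_top _
  have h2 : ∃ z ∈ C, z ≠ q := by
    apply Set.exists_ne_of_one_lt_encard _ q
    rw [hc2]
    exact_mod_cast (by omega : (1 : ℕ) < n + 2)
  obtain ⟨y, hyC, hyq, hconn'⟩ := exists_noncut hsymm hCfin hconn hq h2
  refine ⟨C \ {y}, Set.diff_subset, hconn', ⟨hq, by simp [Ne.symm hyq]⟩, ?_⟩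
  rw [Set.encard_diff_singleton_of_mem hyC, hc2]
  rw [show ((1 : ℕ∞)) = ((1 : ℕ) : ℕ∞) from rfl, ← ENat.coe_sub]
  -- push_cast
  norm_num

theorem Nn2_finite {r : PP → PP → Prop} {n : ℕ} {x : PP} {V : Set PP}
    (hV : V ∈ Nn2 r n x) : V.Finite := by
  rw [← Set.encard_ne_top_iff, hV.2.2]
  rw [show ((n : ℕ∞) + 1) = ((n + 1 : ℕ) : ℕ∞) by push_cast; ring]
  exact ENat.coe_ne_top _

theorem Nn2_step {r : PP → PP → Prop} (hsymm : ∀ p q, r p q → r q p)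
    {n : ℕ} {p q : PP} (hpq : r p q)
    {V : Set PP} (hV : V ∈ Nn2 r n p) : ∃ W ⊆ insert q V, W ∈ Nn2 r n q := by
  by_cases hqV : q ∈ V
  · exact ⟨V, Set.subset_insert _ _, hV.1, hqV, hV.2.2⟩
  have mono : ∀ a b, Relation.ReflTransGen (fun a b => r a b ∧ a ∈ V ∧ b ∈ V) a b →
      Relation.ReflTransGen
        (fun a b => r a b ∧ a ∈ insert q V ∧ b ∈ insert q V) a b :=
    fun a b h => Relation.ReflTransGen.mono (r := fun a b => r a b ∧ a ∈ V ∧ b ∈ V)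
      (p := fun a b => r a b ∧ a ∈ insert q V ∧ b ∈ insert q V)
      (fun a b hab => ⟨hab.1, Or.inr hab.2.1, Or.inr hab.2.2⟩) a b h
  have hconn' : ConnectedIn r (insert q V) := by
    intro a ha b hb
    rcases ha with rfl | ha
    · rcases hb with rfl | hb
      · exact .refl
      · exact Relation.ReflTransGen.head ⟨hsymm _ _ hpq, Or.inl rfl, Or.inr hV.2.1⟩
          (mono _ _ (hV.1 p hV.2.1 b hb))
    · rcases hb with rfl | hb
      · exact (mono _ _ (hV.1 a ha p hV.2.1)).tail ⟨hpq, Or.inr hV.2.1, Or.inl rfl⟩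
      · exact mono _ _ (hV.1 a ha b hb)
  have hcard : (insert q V).encard = (n : ℕ∞) + 1 + 1 := by
    rw [Set.encard_insert_of_notMem hqV, hV.2.2]
  obtain ⟨W, hWsub, hW⟩ := trim_lemma hsymm hconn' (Set.mem_insert q V) hcard
  exact ⟨W, hWsub, hW⟩

theorem Nn2_nonempty {r : PP → PP → Prop}
    (hnbr : ∀ i j : ℤ, r (i, j) (i + 1, j) ∧ r (i, j) (i - 1, j) ∧
      r (i, j) (i, j + 1) ∧ r (i, j) (i, j - 1))
    (hsymm : ∀ p q, r p q → r q p)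
    (n : ℕ) (x : PP) : (Nn2 r n x).Nonempty := by
  classical
  set V : Set PP := (fun k : ℤ => (x.1 + k, x.2)) '' Set.Icc (0 : ℤ) n with hVdef
  have hxV : x ∈ V := ⟨0, by simp [Nat.cast_nonneg], by simp⟩
  have hmem : ∀ k : ℤ, 0 ≤ k → k ≤ (n : ℤ) → (x.1 + k, x.2) ∈ V :=
    fun k h1 h2 => ⟨k, ⟨h1, h2⟩, rfl⟩
  have claim : ∀ k : ℤ, 0 ≤ k → k ≤ (n : ℤ) →
      Relation.ReflTransGen (fun a b => r a b ∧ a ∈ V ∧ b ∈ V) x (x.1 + k, x.2) := by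
    intro k hk
    refine Int.le_induction (motive := fun k _ => k ≤ (n : ℤ) → Relation.ReflTransGen (fun a b => r a b ∧ a ∈ V ∧ b ∈ V) x (x.1 + k, x.2)) ?_ ?_ k hk
    · intro _; rw [show ((x.1 + 0 : ℤ), x.2) = x by simp]
    · intro k hk ih hkn
      have h1 : k ≤ (n : ℤ) := by omega
      refine (ih h1).tail ⟨?_, hmem k hk h1, hmem (k+1) (by omega) hkn⟩
      have := (hnbr (x.1 + k) x.2).1
      rwa [add_assoc] at this
  have hconn : ConnectedIn r V := by
    rintro a ⟨k, ⟨hk0, hkn⟩, rfl⟩ b ⟨l, ⟨hl0, hln⟩, rfl⟩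
    exact (rtg_symm (fun a b h => ⟨hsymm _ _ h.1, h.2.2, h.2.1⟩) (claim k hk0 hkn)).trans
      (claim l hl0 hln)
  refine ⟨V, hconn, hxV, ?_⟩
  have hinj : Function.Injective (fun k : ℤ => ((x.1 + k, x.2) : PP)) := by
    intro a b h
    simpa using congrArg Prod.fst h
  rw [hVdef, hinj.encard_image _,
    show Set.Icc (0 : ℤ) (n : ℤ) = (↑(Finset.Icc (0:ℤ) (n:ℤ)) : Set ℤ) by simp,
    Set.encard_coe_eq_coe_finsetCard, Int.card_Icc]
  -- push_cast
  norm_num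

theorem Nn2_image_nonempty {r : PP → PP → Prop} {n : ℕ} {x : PP} {f : PP → ℝ}
    (hne : (Nn2 r n x).Nonempty) :
    ((fun V => sInf (f '' V)) '' Nn2 r n x).Nonempty := hne.image _

theorem sInf_img_le {f : PP → ℝ} {V : Set PP} (hfin : V.Finite) {y : PP} (hy : y ∈ V) :
    sInf (f '' V) ≤ f y :=
  csInf_le (hfin.image f).bddBelow ⟨y, hy, rfl⟩

theorem bddAbove_Ln_set {r : PP → PP → Prop} {n : ℕ} {x : PP} {f : PP → ℝ} :
    BddAbove ((fun V => sInf (f '' V)) '' Nn2 r n x) := by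
  refine ⟨f x, ?_⟩
  rintro s ⟨V, hV, rfl⟩
  exact sInf_img_le (Nn2_finite hV) hV.2.1

theorem le_Ln {r : PP → PP → Prop} {n : ℕ} {x : PP} {f : PP → ℝ} {V : Set PP}
    (hV : V ∈ Nn2 r n x) : sInf (f '' V) ≤ Ln2 r n f x :=
  le_csSup bddAbove_Ln_set ⟨V, hV, rfl⟩

theorem Ln_le {r : PP → PP → Prop} {n : ℕ} {x : PP} {f : PP → ℝ} {c : ℝ}
    (hne : (Nn2 r n x).Nonempty)
    (h : ∀ V ∈ Nn2 r n x, sInf (f '' V) ≤ c) : Ln2 r n f x ≤ c := by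
  apply csSup_le (hne.image _)
  rintro s ⟨V, hV, rfl⟩
  exact h V hV

/-- Full trend preservation for `L_n` on a neighboring pair with `f p ≤ f q`. -/
theorem Ln_ftp {r : PP → PP → Prop} (hsymm : ∀ p q, r p q → r q p)
    (hnbr : ∀ i j : ℤ, r (i, j) (i + 1, j) ∧ r (i, j) (i - 1, j) ∧
      r (i, j) (i, j + 1) ∧ r (i, j) (i, j - 1))
    {n : ℕ} (f : PP → ℝ) {p q : PP} (hpq : r p q) (hf : f p ≤ f q) :
    Ln2 r n f p ≤ Ln2 r n f q ∧ Ln2 r n f q - Ln2 r n f p ≤ f q - f p := by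
  have hnep : (Nn2 r n p).Nonempty := Nn2_nonempty hnbr hsymm n p
  have hneq : (Nn2 r n q).Nonempty := Nn2_nonempty hnbr hsymm n q
  constructor
  · -- monotone
    apply Ln_le hnep
    intro V hV
    obtain ⟨W, hWsub, hW⟩ := Nn2_step hsymm hpq hV
    refine le_trans ?_ (le_Ln hW)
    apply le_csInf (Set.Nonempty.image f ⟨q, hW.2.1⟩)
    rintro b ⟨y, hy, rfl⟩
    rcases hWsub hy with rfl | hyV
    · exact le_trans (sInf_img_le (Nn2_finite hV) hV.2.1) hf
    · exact sInf_img_le (Nn2_finite hV) hyV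
  · -- difference bound : Ln2 q ≤ Ln2 p + (f q - f p)
    rw [sub_le_iff_le_add]
    apply Ln_le hneq
    intro V hV
    by_cases hpV : p ∈ V
    · have hVp : V ∈ Nn2 r n p := ⟨hV.1, hpV, hV.2.2⟩
      have := le_Ln (f := f) hVp
      linarith
    · obtain ⟨W, hWsub, hW⟩ := Nn2_step hsymm (hsymm _ _ hpq) hV
      have hmin : min (f p) (sInf (f '' V)) ≤ sInf (f '' W) := by
        apply le_csInf (Set.Nonempty.image f ⟨p, hW.2.1⟩)
        rintro b ⟨y, hy, rfl⟩
        rcases hWsub hy with rfl | hyV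
        · exact min_le_left _ _
        · exact le_trans (min_le_right _ _) (sInf_img_le (Nn2_finite hV) hyV)
      have hWL : sInf (f '' W) ≤ Ln2 r n f p := le_Ln hW
      rcases le_total (f p) (sInf (f '' V)) with h | h
      · have h1 : sInf (f '' V) ≤ f q := sInf_img_le (Nn2_finite hV) hV.2.1
        have h2 : f p ≤ Ln2 r n f p := le_trans (by simpa [min_eq_left h] using hmin) hWL
        linarith
      · have h2 : sInf (f '' V) ≤ Ln2 r n f p :=
          le_trans (by simpa [min_eq_right h] using hmin) hWL
        linarith

theorem Un_eq_neg_Ln (r : PP → PP → Prop) (n : ℕ) (f : PP → ℝ) (x : PP) :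
    Un2 r n f x = - Ln2 r n (fun y => -(f y)) x := by
  unfold Un2 Ln2
  have h1 : ∀ V : Set PP, sInf ((fun y => -(f y)) '' V) = -sSup (f '' V) := by
    intro V
    have : (fun y => -(f y)) '' V = -(f '' V) := by
      rw [← Set.image_neg_eq_neg, Set.image_image]
    rw [this, Real.sInf_def, neg_neg]
  have h2 : ((fun V => sInf ((fun y => -(f y)) '' V)) '' Nn2 r n x)
      = -((fun V => sSup (f '' V)) '' Nn2 r n x) := by
    rw [← Set.image_neg_eq_neg, Set.image_image]
    exact Set.image_congr fun V _ => h1 V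
  rw [h2, ← Real.sInf_def]

theorem Un_ftp {r : PP → PP → Prop} (hsymm : ∀ p q, r p q → r q p)
    (hnbr : ∀ i j : ℤ, r (i, j) (i + 1, j) ∧ r (i, j) (i - 1, j) ∧
      r (i, j) (i, j + 1) ∧ r (i, j) (i, j - 1))
    {n : ℕ} (f : PP → ℝ) {p q : PP} (hpq : r p q) (hf : f p ≤ f q) :
    Un2 r n f p ≤ Un2 r n f q ∧ Un2 r n f q - Un2 r n f p ≤ f q - f p := by
  have hg : (fun y => -(f y)) q ≤ (fun y => -(f y)) p := by simpa using hf
  obtain ⟨h1, h2⟩ := Ln_ftp hsymm hnbr (fun y => -(f y)) (hsymm _ _ hpq) hg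
  rw [Un_eq_neg_Ln, Un_eq_neg_Ln]
  constructor
  · linarith
  · linarith

theorem edge_abs {f L : PP → ℝ} {p q : PP}
    (h1 : f p ≤ f q → L p ≤ L q ∧ L q - L p ≤ f q - f p)
    (h2 : f q ≤ f p → L q ≤ L p ∧ L p - L q ≤ f p - f q) :
    |f q - f p| = |L q - L p| + |(f q - L q) - (f p - L p)| := by
  rcases le_total (f p) (f q) with h | h
  · obtain ⟨hb, hba⟩ := h1 h
    rw [abs_of_nonneg (by linarith), abs_of_nonneg (by linarith),
      abs_of_nonneg (by linarith)]
    ring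
  · obtain ⟨hb, hba⟩ := h2 h
    rw [abs_of_nonpos (by linarith), abs_of_nonpos (by linarith),
      abs_of_nonpos (by linarith)]
    ring

theorem tv_split (f g : PP → ℝ)
    (h : ∀ p q : PP, (q = (p.1 + 1, p.2) ∨ q = (p.1, p.2 + 1)) →
      |f q - f p| = |g q - g p| + |(f q - g q) - (f p - g p)|) :
    TV f = TV g + TV (fun x => f x - g x) := by
  unfold TV
  rw [← ENNReal.tsum_add]
  apply tsum_congr
  intro p
  have e1 := h p (p.1 + 1, p.2) (Or.inl rfl)
  have e2 := h p (p.1, p.2 + 1) (Or.inr rfl)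
  rw [e1, e2, ENNReal.ofReal_add (abs_nonneg _) (abs_nonneg _),
    ENNReal.ofReal_add (abs_nonneg _) (abs_nonneg _)]
  ring

/-- `L_n` and `U_n` are total variation preserving on functions of
finite support on `ℤ²`. -/
theorem Ln_Un_total_variation_preserving
    (r : ℤ × ℤ → ℤ × ℤ → Prop)
    (hrefl : ∀ p, r p p) (hsymm : ∀ p q, r p q → r q p)
    (hshift : ∀ p q a, r p q → r (p + a) (q + a))
    (hnbr : ∀ i j : ℤ, r (i, j) (i + 1, j) ∧ r (i, j) (i - 1, j) ∧
      r (i, j) (i, j + 1) ∧ r (i, j) (i, j - 1))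
    (hfin : ∀ p, {q | r p q}.Finite)
    (n : ℕ) (hn : 1 ≤ n)
    (f : ℤ × ℤ → ℝ) (hf : (Function.support f).Finite) :
    TV f = TV (Ln2 r n f) + TV (fun x => f x - Ln2 r n f x) ∧
    TV f = TV (Un2 r n f) + TV (fun x => f x - Un2 r n f x) := by
  have hadj : ∀ p q : PP, (q = (p.1 + 1, p.2) ∨ q = (p.1, p.2 + 1)) → r p q := by
    intro p q hq
    rcases hq with rfl | rfl
    · exact (hnbr p.1 p.2).1
    · exact (hnbr p.1 p.2).2.2.1
  constructor
  · apply tv_split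
    intro p q hq
    exact edge_abs (fun h => Ln_ftp hsymm hnbr f (hadj p q hq) h)
      (fun h => Ln_ftp hsymm hnbr f (hsymm _ _ (hadj p q hq)) h)
  · apply tv_split
    intro p q hq
    exact edge_abs (fun h => Un_ftp hsymm hnbr f (hadj p q hq) h)
      (fun h => Un_ftp hsymm hnbr f (hsymm _ _ (hadj p q hq)) h)
end
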